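/- arXiv:2504.14646 — 5 statements merged into one kernel-verified Lean document; each statement's English description precedes it below -/
import Mathlib

section
/- Let Q be a power associative loop and suppose there exists a ∈ Q such that every element of Q can be written as aⁿ·z for some positive integer n and some z ∈ Z(Q) (this is the condition that Q/Z(Q) is a cyclic group generated by the coset of a). Then Q is an abelian group, i.e., the operation · is associative and commutative. -/
/-- A loop: a set with binary operation and identity element in which all left and
right translations are bijective. -/
class QLoop (Q : Type*) extends Mul Q, One Q where
  one_mul : ∀ x : Q, 1 * x = x
  mul_one : ∀ x : Q, x * 1 = x
  bij_left : ∀ a : Q, Function.Bijective (fun x : Q => a * x)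
  bij_right : ∀ a : Q, Function.Bijective (fun x : Q => x * a)

/-- The right Bol identity. -/
def IsRightBol (Q : Type*) [QLoop Q] : Prop :=
  ∀ x y z : Q, ((x * y) * z) * y = x * ((y * z) * y)

/-- Left translation as a permutation. -/
noncomputable def Lt {Q : Type*} [QLoop Q] (a : Q) : Equiv.Perm Q :=
  Equiv.ofBijective (fun x : Q => a * x) (QLoop.bij_left a)

/-- Right translation as a permutation. -/
noncomputable def Rt {Q : Type*} [QLoop Q] (a : Q) : Equiv.Perm Q :=
  Equiv.ofBijective (fun x : Q => x * a) (QLoop.bij_right a)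

/-- The right multiplication group. -/
noncomputable def rightMultGroup (Q : Type*) [QLoop Q] : Subgroup (Equiv.Perm Q) :=
  Subgroup.closure (Set.range (Rt : Q → Equiv.Perm Q))

/-- The right inner mapping group, generated by R_{x,y} = R_{y x}⁻¹ ∘ R_x ∘ R_y. -/
noncomputable def rightInn (Q : Type*) [QLoop Q] : Subgroup (Equiv.Perm Q) :=
  Subgroup.closure { φ : Equiv.Perm Q | ∃ x y : Q, φ = (Rt (y * x))⁻¹ * Rt x * Rt y }

/-- The inner mapping group, generated by R_{x,y}, L_{x,y} and T_x. -/
noncomputable def innGroup (Q : Type*) [QLoop Q] : Subgroup (Equiv.Perm Q) :=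
  Subgroup.closure
    ({ φ : Equiv.Perm Q | ∃ x y : Q, φ = (Rt (y * x))⁻¹ * Rt x * Rt y } ∪
     { φ : Equiv.Perm Q | ∃ x y : Q, φ = (Lt (x * y))⁻¹ * Lt x * Lt y } ∪
     { φ : Equiv.Perm Q | ∃ x : Q, φ = (Lt x)⁻¹ * Rt x })

/-- A subloop: contains 1, closed under multiplication and both divisions. -/
structure IsSubloop {Q : Type*} [QLoop Q] (S : Set Q) : Prop where
  one_mem : (1 : Q) ∈ S
  mul_mem : ∀ ⦃a b : Q⦄, a ∈ S → b ∈ S → a * b ∈ S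
  ldiv_mem : ∀ ⦃a x : Q⦄, a ∈ S → a * x ∈ S → x ∈ S
  rdiv_mem : ∀ ⦃a y : Q⦄, a ∈ S → y * a ∈ S → y ∈ S

/-- A normal subloop: a subloop invariant under all inner mappings. -/
def IsNormalSubloop {Q : Type*} [QLoop Q] (S : Set Q) : Prop :=
  IsSubloop S ∧ ∀ φ ∈ innGroup Q, (φ : Equiv.Perm Q) '' S = S

/-- The commutant. -/
def commutant (Q : Type*) [QLoop Q] : Set Q := { a : Q | ∀ y : Q, a * y = y * a }

/-- The left nucleus. -/
def leftNucleus (Q : Type*) [QLoop Q] : Set Q :=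
  { a : Q | ∀ y z : Q, a * (y * z) = (a * y) * z }

/-- The center. -/
def loopCenter (Q : Type*) [QLoop Q] : Set Q :=
  { a : Q | ∀ y z : Q, a * y = y * a ∧ a * (y * z) = (a * y) * z ∧
      y * (a * z) = (y * a) * z ∧ y * (z * a) = (y * z) * a }

/-- Powers: x^0 = 1, x^{n+1} = x^n * x. -/
def lpow {Q : Type*} [QLoop Q] (x : Q) : ℕ → Q
  | 0 => 1
  | n + 1 => lpow x n * x

/-- The subloop generated by an element. -/
def subloopClosure {Q : Type*} [QLoop Q] (x : Q) : Set Q :=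
  ⋂₀ { S : Set Q | IsSubloop S ∧ x ∈ S }

/-- Power associativity: the subloop generated by any element is associative. -/
def PowerAssociative (Q : Type*) [QLoop Q] : Prop :=
  ∀ x : Q, ∀ a ∈ subloopClosure x, ∀ b ∈ subloopClosure x, ∀ c ∈ subloopClosure x,
    a * (b * c) = (a * b) * c

/-!
Every element has the form aⁿz with z central. Central elements can be moved freely through
products, and powers of a associate by power associativity, so
(aᵐz₁)(aⁿz₂) = aᵐ⁺ⁿ(z₁z₂): multiplication adds exponents and multiplies central parts, and both
operations are associative and commutative.
-/

section
variable {Q : Type*} [QLoop Q]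

lemma mul_comm_of_mem_loopCenter {c : Q} (hc : c ∈ loopCenter Q) (y : Q) : c * y = y * c :=
  (hc y 1).1

lemma mul_assoc_of_mem_loopCenter_left {c : Q} (hc : c ∈ loopCenter Q) (y z : Q) :
    c * (y * z) = (c * y) * z :=
  (hc y z).2.1

lemma mul_assoc_of_mem_loopCenter_mid {c : Q} (hc : c ∈ loopCenter Q) (y z : Q) :
    y * (c * z) = (y * c) * z :=
  (hc y z).2.2.1

lemma mul_assoc_of_mem_loopCenter_right {c : Q} (hc : c ∈ loopCenter Q) (y z : Q) :
    y * (z * c) = (y * z) * c :=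
  (hc y z).2.2.2

lemma mul_mem_loopCenter {c d : Q} (hc : c ∈ loopCenter Q) (hd : d ∈ loopCenter Q) :
    c * d ∈ loopCenter Q := by
  intro y z
  refine ⟨?_, ?_, ?_, ?_⟩
  · rw [← mul_assoc_of_mem_loopCenter_mid hd, mul_comm_of_mem_loopCenter hd y,
      mul_assoc_of_mem_loopCenter_left hc, mul_comm_of_mem_loopCenter hc,
      mul_assoc_of_mem_loopCenter_right hd]
  · rw [← mul_assoc_of_mem_loopCenter_mid hd, mul_assoc_of_mem_loopCenter_left hd,
      mul_assoc_of_mem_loopCenter_left hc, mul_assoc_of_mem_loopCenter_left hc]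
  · rw [← mul_assoc_of_mem_loopCenter_mid hd, mul_assoc_of_mem_loopCenter_mid hc,
      mul_assoc_of_mem_loopCenter_mid hd, ← mul_assoc_of_mem_loopCenter_right hd y c]
  · rw [mul_assoc_of_mem_loopCenter_right hd, mul_assoc_of_mem_loopCenter_right hd,
      mul_assoc_of_mem_loopCenter_right hc, ← mul_assoc_of_mem_loopCenter_right hd]

lemma isSubloop_subloopClosure (x : Q) : IsSubloop (subloopClosure x) where
  one_mem _ hS := hS.1.one_mem
  mul_mem _ _ ha hb S hS := hS.1.mul_mem (ha S hS) (hb S hS)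
  ldiv_mem _ _ ha hab S hS := hS.1.ldiv_mem (ha S hS) (hab S hS)
  rdiv_mem _ _ ha hab S hS := hS.1.rdiv_mem (ha S hS) (hab S hS)

lemma mem_subloopClosure_self (x : Q) : x ∈ subloopClosure x := fun _ hS => hS.2

lemma lpow_mem_subloopClosure (x : Q) (n : ℕ) : lpow x n ∈ subloopClosure x := by
  induction n with
  | zero => exact (isSubloop_subloopClosure x).one_mem
  | succ n ih => exact (isSubloop_subloopClosure x).mul_mem ih (mem_subloopClosure_self x)

lemma lpow_add (hpa : PowerAssociative Q) (a : Q) (m n : ℕ) :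
    lpow a (m + n) = lpow a m * lpow a n := by
  induction n with
  | zero => exact (QLoop.mul_one _).symm
  | succ n ih =>
    show lpow a (m + n) * a = lpow a m * (lpow a n * a)
    rw [ih, hpa a _ (lpow_mem_subloopClosure a m) _ (lpow_mem_subloopClosure a n) _
      (mem_subloopClosure_self a)]

variable (hpa : PowerAssociative Q) (a : Q) {z₁ z₂ z₃ : Q}
  (h₁ : z₁ ∈ loopCenter Q) (h₂ : z₂ ∈ loopCenter Q)
include hpa h₁ h₂

lemma lpow_mul_center_mul_lpow_mul_center (m n : ℕ) :
    (lpow a m * z₁) * (lpow a n * z₂) = lpow a (m + n) * (z₁ * z₂) := by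
  rw [mul_assoc_of_mem_loopCenter_right h₂, ← mul_assoc_of_mem_loopCenter_mid h₁,
    mul_comm_of_mem_loopCenter h₁ (lpow a n), mul_assoc_of_mem_loopCenter_right h₁,
    ← lpow_add hpa, ← mul_assoc_of_mem_loopCenter_right h₂]

lemma lpow_mul_center_comm (m n : ℕ) :
    (lpow a m * z₁) * (lpow a n * z₂) = (lpow a n * z₂) * (lpow a m * z₁) := by
  rw [lpow_mul_center_mul_lpow_mul_center hpa a h₁ h₂,
    lpow_mul_center_mul_lpow_mul_center hpa a h₂ h₁, Nat.add_comm,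
    mul_comm_of_mem_loopCenter h₁]

lemma lpow_mul_center_assoc (h₃ : z₃ ∈ loopCenter Q) (m n k : ℕ) :
    (lpow a m * z₁) * ((lpow a n * z₂) * (lpow a k * z₃)) =
      ((lpow a m * z₁) * (lpow a n * z₂)) * (lpow a k * z₃) := by
  rw [lpow_mul_center_mul_lpow_mul_center hpa a h₂ h₃,
    lpow_mul_center_mul_lpow_mul_center hpa a h₁ (mul_mem_loopCenter h₂ h₃),
    lpow_mul_center_mul_lpow_mul_center hpa a h₁ h₂,
    lpow_mul_center_mul_lpow_mul_center hpa a (mul_mem_loopCenter h₁ h₂) h₃,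
    Nat.add_assoc, mul_assoc_of_mem_loopCenter_right h₃]

end

/-- A power associative loop whose quotient by the center is cyclic
(every element is a positive power of a fixed element times a central element)
is an abelian group. -/
theorem stmt0 (Q : Type*) [QLoop Q] (hpa : PowerAssociative Q)
    (a : Q) (hcyc : ∀ q : Q, ∃ n : ℕ, 0 < n ∧ ∃ z ∈ loopCenter Q, q = lpow a n * z) :
    (∀ x y z : Q, x * (y * z) = (x * y) * z) ∧ (∀ x y : Q, x * y = y * x) := by
  constructor
  · intro x y z
    obtain ⟨m, -, z₁, h₁, rfl⟩ := hcyc x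
    obtain ⟨n, -, z₂, h₂, rfl⟩ := hcyc y
    obtain ⟨k, -, z₃, h₃, rfl⟩ := hcyc z
    exact lpow_mul_center_assoc hpa a h₁ h₂ h₃ m n k
  · intro x y
    obtain ⟨m, -, z₁, h₁, rfl⟩ := hcyc x
    obtain ⟨n, -, z₂, h₂, rfl⟩ := hcyc y
    exact lpow_mul_center_comm hpa a h₁ h₂ m n
end

section
/- Let p be a prime and let Q be a right Bol loop of order p³. Then one of the following holds: (i) Z(Q) = {1}; or (ii) Q is an abelian group (· is associative and commutative); or (iii) |Z(Q)| = p and xᵖ ∈ Z(Q) for every x ∈ Q (so that Q/Z(Q) is an elementary abelian group of order p²). -/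
/-!
The Bol identity gives `R_x ^ n = R_{x^n}`, so for central `z, w` the elements `x^i z`
multiply as in an abelian group and satisfy `(a s) t = a (s t)`. The right translations by
`S = ⟨x⟩ Z(Q)` therefore form a group acting freely on `Q`, and `|S| = d · |Z(Q)|` divides
`|Q| = p³`, where `d` is the order of `x` modulo `Z(Q)`; if equality holds, `Q = ⟨x⟩ Z(Q)` is an
abelian group. Writing `|Z(Q)| = p^i`, equality is forced for `i = 3`, for `i = 2` by any
`x ∉ Z(Q)`, and for `i = 1` by any `x` with `x^p ∉ Z(Q)`.
-/

namespace QLoop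

variable {Q : Type*} [QLoop Q]

theorem mul_left_cancel {a b c : Q} (h : a * b = a * c) : b = c := (bij_left a).1 h

end QLoop

section Translations

variable {Q : Type*} [QLoop Q]

theorem Rt_apply (a x : Q) : Rt a x = x * a := rfl

theorem Rt_one : Rt (1 : Q) = 1 := Equiv.ext QLoop.mul_one

theorem Rt_injective : Function.Injective (Rt : Q → Equiv.Perm Q) := fun a b h => by
  simpa only [Rt_apply, QLoop.one_mul] using congrArg (· (1 : Q)) h

theorem lpow_one (x : Q) : lpow x 1 = x := QLoop.one_mul x

theorem Rt_pow_apply_lpow (x : Q) (i n : ℕ) : (Rt x ^ n) (lpow x i) = lpow x (i + n) := by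
  induction n with
  | zero => rfl
  | succ n ih => rw [pow_succ', Equiv.Perm.mul_apply, ih]; rfl

/-- The right translations by `S` form a finite submonoid, hence a subgroup, of `Perm Q`, and it
acts freely on `Q`. -/
theorem card_dvd_card_of_mul_assoc [Finite Q] {S : Set Q} (one_mem : (1 : Q) ∈ S)
    (mul_mem : ∀ s ∈ S, ∀ t ∈ S, s * t ∈ S)
    (assoc : ∀ a : Q, ∀ s ∈ S, ∀ t ∈ S, a * s * t = a * (s * t)) :
    Nat.card S ∣ Nat.card Q := by
  let M : Submonoid (Equiv.Perm Q) :=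
    { carrier := Rt '' S
      one_mem' := ⟨1, one_mem, Rt_one⟩
      mul_mem' := by
        rintro _ _ ⟨s, hs, rfl⟩ ⟨t, ht, rfl⟩
        exact ⟨t * s, mul_mem t ht s hs, Equiv.ext fun a => (assoc a t ht s hs).symm⟩ }
  let G := Subgroup.closure (M : Set (Equiv.Perm Q))
  have hG : (G : Set (Equiv.Perm Q)) = Rt '' S := by
    rw [← Subgroup.coe_toSubmonoid, Subgroup.closure_toSubmonoid_of_finite,
      Submonoid.closure_eq]
    rfl
  have hfree (a : Q) : MulAction.stabilizer G a = ⊥ := by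
    refine (Subgroup.eq_bot_iff_forall _).2 fun g hg => ?_
    obtain ⟨s, -, hs⟩ : (g : Equiv.Perm Q) ∈ Rt '' S := hG ▸ g.2
    have hs1 : a * s = a * 1 := by
      rw [QLoop.mul_one, ← Rt_apply, hs]
      exact hg
    rw [← Subtype.coe_inj, Subgroup.coe_one, ← hs, QLoop.mul_left_cancel hs1, Rt_one]
  have hcard : Nat.card G = Nat.card S := by
    rw [← Nat.card_image_of_injective Rt_injective, ← hG]
    rfl
  rw [Nat.card_congr (MulAction.selfEquivOrbitsQuotientProd hfree), Nat.card_prod, hcard]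
  exact dvd_mul_left _ _

end Translations

namespace IsRightBol

variable {Q : Type*} [QLoop Q] (hbol : IsRightBol Q)
include hbol

theorem Rt_mul_Rt_mul_Rt (y z : Q) : Rt y * Rt z * Rt y = Rt (y * z * y) :=
  Equiv.ext fun a => hbol a y z

theorem Rt_pow (x : Q) (n : ℕ) : Rt x ^ n = Rt (lpow x n) := by
  induction n using Nat.twoStepInduction with
  | zero => exact Rt_one.symm
  | one => rw [pow_one, lpow_one]
  | more n ih _ =>
    have hx : x * lpow x n = lpow x (n + 1) := by
      simpa only [ih, lpow_one, Rt_apply, add_comm] using Rt_pow_apply_lpow x 1 n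
    rw [pow_succ, pow_succ', ih, hbol.Rt_mul_Rt_mul_Rt, hx]
    rfl

theorem mul_lpow_mul_lpow (u x : Q) (i j : ℕ) : u * lpow x i * lpow x j = u * lpow x (i + j) := by
  rw [← Rt_apply, ← Rt_apply, ← Rt_apply, ← hbol.Rt_pow, ← hbol.Rt_pow, ← hbol.Rt_pow,
    ← Equiv.Perm.mul_apply, ← pow_add, add_comm]

theorem lpow_mul_lpow (x : Q) (i j : ℕ) : lpow x i * lpow x j = lpow x (i + j) := by
  simpa only [QLoop.one_mul] using hbol.mul_lpow_mul_lpow 1 x i j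

theorem lpow_orderOf_Rt [Finite Q] (x : Q) : lpow x (orderOf (Rt x)) = 1 :=
  Rt_injective (by rw [← hbol.Rt_pow, pow_orderOf_eq_one, Rt_one])

end IsRightBol

namespace loopCenter

variable {Q : Type*} [QLoop Q] {a b : Q}

theorem comm (ha : a ∈ loopCenter Q) (y : Q) : a * y = y * a := (ha y 1).1

theorem mul_assoc_left (ha : a ∈ loopCenter Q) (y z : Q) : a * (y * z) = a * y * z :=
  (ha y z).2.1

theorem mul_assoc_mid (ha : a ∈ loopCenter Q) (y z : Q) : y * (a * z) = y * a * z :=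
  (ha y z).2.2.1

theorem mul_assoc_right (ha : a ∈ loopCenter Q) (y z : Q) : y * (z * a) = y * z * a :=
  (ha y z).2.2.2

theorem one_mem : (1 : Q) ∈ loopCenter Q := fun y z => by
  simp only [QLoop.one_mul, QLoop.mul_one, and_self]

theorem mul_mem (ha : a ∈ loopCenter Q) (hb : b ∈ loopCenter Q) : a * b ∈ loopCenter Q := by
  intro y z
  refine ⟨?_, ?_, ?_, ?_⟩
  · rw [← mul_assoc_left ha, comm hb, mul_assoc_left ha, comm ha, mul_assoc_right hb]
  · rw [← mul_assoc_left ha, ← mul_assoc_left ha, mul_assoc_left hb, mul_assoc_left ha]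
  · rw [← mul_assoc_left ha, mul_assoc_mid ha, mul_assoc_mid hb, mul_assoc_right hb]
  · rw [mul_assoc_right hb z a, mul_assoc_right hb y, mul_assoc_right ha, mul_assoc_right hb]

theorem lpow_mem (ha : a ∈ loopCenter Q) (n : ℕ) : lpow a n ∈ loopCenter Q := by
  induction n with
  | zero => exact one_mem
  | succ n ih => exact mul_mem ih ha

theorem exists_mul_eq_one [Finite Q] (hbol : IsRightBol Q) (ha : a ∈ loopCenter Q) :
    ∃ b ∈ loopCenter Q, b * a = 1 := by
  refine ⟨lpow a (orderOf (Rt a) - 1), lpow_mem ha _, ?_⟩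
  rw [← hbol.lpow_orderOf_Rt a, ← Nat.sub_add_cancel (orderOf_pos (Rt a))]
  rfl

theorem mem_of_mul_mem [Finite Q] (hbol : IsRightBol Q) (ha : a ∈ loopCenter Q)
    (hab : a * b ∈ loopCenter Q) : b ∈ loopCenter Q := by
  obtain ⟨c, hc, hca⟩ := exists_mul_eq_one hbol ha
  rw [← QLoop.one_mul b, ← hca, ← mul_assoc_mid ha]
  exact mul_mem hc hab

end loopCenter

/-- The order of `x` modulo the center, i.e. of `x Z(Q)` in `Q / Z(Q)`
(`0` if no positive power of `x` is central, which cannot happen in a finite right Bol loop). -/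
noncomputable def centralOrder {Q : Type*} [QLoop Q] (x : Q) : ℕ :=
  sInf {k | 0 < k ∧ lpow x k ∈ loopCenter Q}

def powersMulCenter {Q : Type*} [QLoop Q] (x : Q) : Set Q :=
  {q | ∃ i, ∃ z ∈ loopCenter Q, q = lpow x i * z}

theorem centralOrder_le {Q : Type*} [QLoop Q] {x : Q} {k : ℕ} (hk : 0 < k)
    (hx : lpow x k ∈ loopCenter Q) : centralOrder x ≤ k :=
  Nat.sInf_le (s := {k | 0 < k ∧ lpow x k ∈ loopCenter Q}) ⟨hk, hx⟩

namespace IsRightBol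

variable {Q : Type*} [QLoop Q] (hbol : IsRightBol Q)
include hbol

section CentralOrder

variable [Finite Q] (x : Q)

theorem centralOrder_pos_and_mem :
    0 < centralOrder x ∧ lpow x (centralOrder x) ∈ loopCenter Q :=
  Nat.sInf_mem (s := {k | 0 < k ∧ lpow x k ∈ loopCenter Q})
    ⟨orderOf (Rt x), orderOf_pos _, hbol.lpow_orderOf_Rt x ▸ loopCenter.one_mem⟩

theorem lpow_centralOrder_mul_mem (q : ℕ) : lpow x (centralOrder x * q) ∈ loopCenter Q := by
  induction q with
  | zero => exact loopCenter.one_mem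
  | succ q ih =>
    rw [Nat.mul_succ, ← hbol.lpow_mul_lpow]
    exact loopCenter.mul_mem ih (hbol.centralOrder_pos_and_mem x).2

theorem lpow_mem_loopCenter_iff {k : ℕ} : lpow x k ∈ loopCenter Q ↔ centralOrder x ∣ k := by
  refine ⟨fun hk => ?_, fun ⟨q, hq⟩ => hq ▸ hbol.lpow_centralOrder_mul_mem x q⟩
  have hmod : lpow x (k % centralOrder x) ∈ loopCenter Q := by
    refine loopCenter.mem_of_mul_mem hbol (hbol.lpow_centralOrder_mul_mem x (k / centralOrder x)) ?_
    rwa [hbol.lpow_mul_lpow, Nat.div_add_mod]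
  by_contra hndvd
  have hpos : 0 < k % centralOrder x := Nat.pos_of_ne_zero (mt Nat.dvd_of_mod_eq_zero hndvd)
  exact (centralOrder_le hpos hmod).not_gt (Nat.mod_lt k (hbol.centralOrder_pos_and_mem x).1)

theorem centralOrder_eq_one_iff : centralOrder x = 1 ↔ x ∈ loopCenter Q := by
  rw [← Nat.dvd_one, ← hbol.lpow_mem_loopCenter_iff, lpow_one]

end CentralOrder

section PowersMulCenter

variable {x z w : Q} (hz : z ∈ loopCenter Q) (hw : w ∈ loopCenter Q)
include hz

theorem lpow_mul_mul_lpow (i j : ℕ) : lpow x i * z * lpow x j = lpow x (i + j) * z := by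
  rw [← loopCenter.mul_assoc_mid hz, loopCenter.comm hz, loopCenter.mul_assoc_right hz,
    hbol.lpow_mul_lpow]

include hw

theorem mul_lpow_mul_mul_lpow_mul (a : Q) (i j : ℕ) :
    a * (lpow x i * z) * (lpow x j * w) = a * (lpow x (i + j) * (z * w)) := by
  rw [loopCenter.mul_assoc_right hz, loopCenter.mul_assoc_right hw,
    ← loopCenter.mul_assoc_mid hz, loopCenter.comm hz, loopCenter.mul_assoc_right hz,
    hbol.mul_lpow_mul_lpow, ← loopCenter.mul_assoc_right hw,
    ← loopCenter.mul_assoc_right (loopCenter.mul_mem hz hw)]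

theorem lpow_mul_mul_lpow_mul (i j : ℕ) :
    lpow x i * z * (lpow x j * w) = lpow x (i + j) * (z * w) := by
  simpa only [QLoop.one_mul] using hbol.mul_lpow_mul_mul_lpow_mul hz hw 1 i j

theorem eq_of_lpow_mul_eq_lpow_mul [Finite Q] {i j : ℕ} (hij : i ≤ j) (hj : j < centralOrder x)
    (h : lpow x i * z = lpow x j * w) : i = j ∧ z = w := by
  set m := orderOf (Rt x)
  have hm : lpow x m = 1 := hbol.lpow_orderOf_Rt x
  have hdm : centralOrder x ∣ m := (hbol.lpow_mem_loopCenter_iff x).1 (hm ▸ loopCenter.one_mem)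
  have hjm : j ≤ m := hj.le.trans (Nat.le_of_dvd (orderOf_pos _) hdm)
  have hshift : lpow x (i + (m - j)) * z = w := by
    have := congrArg (· * lpow x (m - j)) h
    rwa [hbol.lpow_mul_mul_lpow hz, hbol.lpow_mul_mul_lpow hw, Nat.add_sub_cancel' hjm, hm,
      QLoop.one_mul] at this
  have hdvd : centralOrder x ∣ i + (m - j) := by
    rw [← hbol.lpow_mem_loopCenter_iff]
    refine loopCenter.mem_of_mul_mem hbol hz ?_
    rw [loopCenter.comm hz, hshift]
    exact hw
  have hji : j - i = 0 := by
    refine Nat.eq_zero_of_dvd_of_lt (a := centralOrder x) ?_ (by omega)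
    have := Nat.dvd_sub hdm hdvd
    rwa [show m - (i + (m - j)) = j - i by omega] at this
  obtain rfl : i = j := by omega
  exact ⟨rfl, QLoop.mul_left_cancel h⟩

end PowersMulCenter

theorem card_powersMulCenter [Finite Q] (x : Q) :
    Nat.card (powersMulCenter x) = centralOrder x * Nat.card (loopCenter Q) := by
  let f : Fin (centralOrder x) × loopCenter Q → powersMulCenter x :=
    fun iz => ⟨lpow x iz.1 * iz.2, iz.1, iz.2, iz.2.2, rfl⟩
  have hinj : f.Injective := by
    have key : ∀ iz jw : Fin (centralOrder x) × loopCenter Q, (iz.1 : ℕ) ≤ jw.1 →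
        f iz = f jw → iz = jw := by
      rintro ⟨i, z⟩ ⟨j, w⟩ hij h
      obtain ⟨hij, hzw⟩ :=
        hbol.eq_of_lpow_mul_eq_lpow_mul z.2 w.2 hij j.2 (congrArg Subtype.val h)
      exact Prod.ext (Fin.ext hij) (Subtype.ext hzw)
    intro iz jw h
    rcases le_total (iz.1 : ℕ) jw.1 with hle | hle
    · exact key iz jw hle h
    · exact (key jw iz hle h.symm).symm
  have hsurj : f.Surjective := by
    rintro ⟨_, i, z, hz, rfl⟩
    have hd := (hbol.centralOrder_pos_and_mem x).1
    refine ⟨(⟨i % centralOrder x, Nat.mod_lt i hd⟩,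
      ⟨lpow x (centralOrder x * (i / centralOrder x)) * z,
        loopCenter.mul_mem (hbol.lpow_centralOrder_mul_mem x _) hz⟩), Subtype.ext ?_⟩
    change lpow x (i % centralOrder x) * (lpow x (centralOrder x * (i / centralOrder x)) * z) = _
    rw [loopCenter.mul_assoc_right hz, hbol.lpow_mul_lpow, Nat.mod_add_div]
  rw [← Nat.card_congr (Equiv.ofBijective f ⟨hinj, hsurj⟩), Nat.card_prod, Nat.card_fin]

theorem centralOrder_mul_card_loopCenter_dvd [Finite Q] (x : Q) :
    centralOrder x * Nat.card (loopCenter Q) ∣ Nat.card Q := by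
  rw [← hbol.card_powersMulCenter]
  refine card_dvd_card_of_mul_assoc ⟨0, 1, loopCenter.one_mem, (QLoop.mul_one 1).symm⟩ ?_ ?_
  · rintro _ ⟨i, z, hz, rfl⟩ _ ⟨j, w, hw, rfl⟩
    exact ⟨i + j, z * w, loopCenter.mul_mem hz hw, hbol.lpow_mul_mul_lpow_mul hz hw i j⟩
  · rintro a _ ⟨i, z, hz, rfl⟩ _ ⟨j, w, hw, rfl⟩
    rw [hbol.mul_lpow_mul_mul_lpow_mul hz hw, hbol.lpow_mul_mul_lpow_mul hz hw]

theorem assoc_comm_of_powersMulCenter_eq_univ {x : Q} (hx : powersMulCenter x = Set.univ) :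
    (∀ a b c : Q, a * (b * c) = a * b * c) ∧ ∀ a b : Q, a * b = b * a := by
  have hrep (q : Q) : q ∈ powersMulCenter x := hx ▸ Set.mem_univ q
  constructor
  · intro a b c
    obtain ⟨i, z, hz, rfl⟩ := hrep a
    obtain ⟨j, w, hw, rfl⟩ := hrep b
    obtain ⟨k, v, hv, rfl⟩ := hrep c
    rw [hbol.lpow_mul_mul_lpow_mul hw hv, hbol.lpow_mul_mul_lpow_mul hz (loopCenter.mul_mem hw hv),
      hbol.lpow_mul_mul_lpow_mul hz hw, hbol.lpow_mul_mul_lpow_mul (loopCenter.mul_mem hz hw) hv,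
      add_assoc, loopCenter.mul_assoc_left hz]
  · intro a b
    obtain ⟨i, z, hz, rfl⟩ := hrep a
    obtain ⟨j, w, hw, rfl⟩ := hrep b
    rw [hbol.lpow_mul_mul_lpow_mul hz hw, hbol.lpow_mul_mul_lpow_mul hw hz, add_comm,
      loopCenter.comm hz]

theorem assoc_comm_of_centralOrder_mul_card_loopCenter_eq [Finite Q] {x : Q}
    (h : centralOrder x * Nat.card (loopCenter Q) = Nat.card Q) :
    (∀ a b c : Q, a * (b * c) = a * b * c) ∧ ∀ a b : Q, a * b = b * a := by
  refine hbol.assoc_comm_of_powersMulCenter_eq_univ (x := x)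
    (Set.eq_of_subset_of_ncard_le (Set.subset_univ _) ?_)
  rw [Set.ncard_univ, ← Nat.card_coe_set_eq, hbol.card_powersMulCenter, h]

/-- Here `x Z(Q)` has order `p^(k+1)` in `Q / Z(Q)`, so `Q = ⟨x⟩ Z(Q)`. -/
theorem assoc_comm_of_lpow_prime_pow_not_mem [Finite Q] {p k j : ℕ} (hp : p.Prime)
    (hcard : Nat.card Q = p ^ (k + 1 + j))
    (hZ : Nat.card (loopCenter Q) = p ^ j) {x : Q} (hx : lpow x (p ^ k) ∉ loopCenter Q) :
    (∀ a b c : Q, a * (b * c) = a * b * c) ∧ ∀ a b : Q, a * b = b * a := by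
  have hd : centralOrder x = p ^ (k + 1) := by
    refine Nat.eq_prime_pow_of_dvd_least_prime_pow hp ?_ ?_
    · rwa [← hbol.lpow_mem_loopCenter_iff]
    · refine Nat.dvd_of_mul_dvd_mul_right (pow_pos hp.pos j) ?_
      rw [← pow_add, ← hZ, ← hcard]
      exact hbol.centralOrder_mul_card_loopCenter_dvd x
  exact hbol.assoc_comm_of_centralOrder_mul_card_loopCenter_eq (by rw [hd, hZ, ← pow_add, hcard])

end IsRightBol

/-- A right Bol loop of order p^3 has trivial center, or is an abelian
group, or has center of order p with Q/Z(Q) elementary abelian of order p^2. -/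
theorem stmt1 (p : ℕ) (hp : p.Prime) (Q : Type*) [QLoop Q]
    (hbol : IsRightBol Q) (hcard : Nat.card Q = p ^ 3) :
    loopCenter Q = {1} ∨
    ((∀ x y z : Q, x * (y * z) = (x * y) * z) ∧ (∀ x y : Q, x * y = y * x)) ∨
    ((loopCenter Q).ncard = p ∧ ∀ x : Q, lpow x p ∈ loopCenter Q) := by
  have : Finite Q := Nat.finite_of_card_ne_zero (hcard ▸ pow_ne_zero 3 hp.ne_zero)
  have hZdvd : Nat.card (loopCenter Q) ∣ p ^ 3 :=
    hcard ▸ (dvd_mul_left _ _).trans (hbol.centralOrder_mul_card_loopCenter_dvd 1)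
  obtain ⟨i, hi, hZ⟩ := (Nat.dvd_prime_pow hp).1 hZdvd
  interval_cases i
  · left
    refine (Set.eq_of_subset_of_ncard_le (Set.singleton_subset_iff.2 loopCenter.one_mem) ?_).symm
    rw [Set.ncard_singleton, ← Nat.card_coe_set_eq, hZ, pow_zero]
  · by_cases hpow : ∀ x : Q, lpow x p ∈ loopCenter Q
    · exact Or.inr (Or.inr ⟨by rw [← Nat.card_coe_set_eq, hZ, pow_one], hpow⟩)
    obtain ⟨x, hx⟩ := not_forall.1 hpow
    exact Or.inr (Or.inl (hbol.assoc_comm_of_lpow_prime_pow_not_mem (k := 1) hp hcard hZ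
      (by rwa [pow_one])))
  · obtain ⟨x, hx⟩ : ∃ x : Q, x ∉ loopCenter Q := by
      by_contra! h
      rw [Set.eq_univ_of_forall h, Nat.card_univ, hcard] at hZ
      exact absurd (Nat.pow_right_injective hp.two_le hZ) (by norm_num)
    exact Or.inr (Or.inl (hbol.assoc_comm_of_lpow_prime_pow_not_mem (k := 0) hp hcard hZ
      (by rwa [pow_zero, lpow_one])))
  · refine Or.inr (Or.inl (hbol.assoc_comm_of_centralOrder_mul_card_loopCenter_eq (x := 1) ?_))
    rw [(hbol.centralOrder_eq_one_iff 1).2 loopCenter.one_mem, hZ, hcard, one_mul]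
end

section
/- Let Q be a finite right Bol loop of odd order and let c ∈ Nucₗ(Q) be an element with c ≠ 1 and (c·c)·c = 1 (so that H = {1, c, c·c} is a subgroup of Nucₗ(Q) of order 3). Suppose that for every x ∈ Q the element T_x(c) belongs to H, where T_x(c) denotes the unique z ∈ Q with x·z = c·x. Then c ∈ C(Q), i.e., c·y = y·c for all y ∈ Q. -/
/-!
Every `y` satisfies `y * T_y(c) = c * y` with `T_y(c) ∈ {c, c * c}`, so `Q` splits into the
elements commuting with `c` and the "twisted" ones, `(c * y) * c = y`. Because `c` is in the left
nucleus, the Bol identity shows that right multiplication by a twisted element swaps the two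
classes. Hence if some element is twisted, the classes have equal size and `|Q|` is even.
-/

open Function

theorem Nat.even_card_of_injective_swap {α : Type*} [Finite α] (p : α → Prop) {f : α → α}
    (hf : Injective f) (hpf : ∀ a, p a → ¬ p (f a)) (hnpf : ∀ a, ¬ p a → p (f a)) :
    Even (Nat.card α) := by
  classical
  have hle : Nat.card {a // p a} ≤ Nat.card {a // ¬ p a} :=
    Nat.card_le_card_of_injective (fun a => ⟨f a, hpf _ a.2⟩)
      fun a b hab => Subtype.ext (hf (congrArg Subtype.val hab))
  have hge : Nat.card {a // ¬ p a} ≤ Nat.card {a // p a} :=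
    Nat.card_le_card_of_injective (fun a => ⟨f a, hnpf _ a.2⟩)
      fun a b hab => Subtype.ext (hf (congrArg Subtype.val hab))
  rw [← Nat.card_congr (Equiv.sumCompl p), Nat.card_sum, le_antisymm hle hge]
  exact ⟨_, rfl⟩

namespace QLoop

variable {Q : Type*} [QLoop Q]

theorem cancel_left {a x y : Q} (h : a * x = a * y) : x = y :=
  (bij_left a).1 h

theorem cancel_right {a x y : Q} (h : x * a = y * a) : x = y :=
  (bij_right a).1 h

end QLoop

namespace IsRightBol

variable {Q : Type*} [QLoop Q] {c : Q}

theorem mul_mul_self (hbol : IsRightBol Q) (a : Q) : (a * c) * c = a * (c * c) := by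
  simpa only [QLoop.mul_one] using hbol a c 1

theorem mul_mul_mul_of_cube_eq_one (hbol : IsRightBol Q) (hc3 : (c * c) * c = 1) (a : Q) :
    ((a * c) * c) * c = a := by
  simpa only [hc3, QLoop.mul_one] using hbol a c c

theorem eq_mul_mul_iff_mul_eq (hbol : IsRightBol Q) (hc3 : (c * c) * c = 1) {a b : Q} :
    a = (b * c) * c ↔ a * c = b := by
  constructor
  · rintro rfl
    exact hbol.mul_mul_mul_of_cube_eq_one hc3 b
  · intro h
    apply QLoop.cancel_right (a := c)
    rw [h, hbol.mul_mul_mul_of_cube_eq_one hc3]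

theorem mul_ne_mul_of_twisted (hbol : IsRightBol Q) (hc1 : c ≠ 1) (hc3 : (c * c) * c = 1)
    {y : Q} (hy : (c * y) * c = y) : c * y ≠ y * c := by
  intro hcomm
  have hy' : (y * c) * c = y := hcomm ▸ hy
  have hyc : y * c = y * 1 :=
    calc y * c = ((y * c) * c) * c := by rw [hy']
      _ = y * 1 := by rw [hbol.mul_mul_mul_of_cube_eq_one hc3, QLoop.mul_one]
  exact hc1 (QLoop.cancel_left hyc)

theorem mul_comm_or_twisted (hbol : IsRightBol Q) (hc1 : c ≠ 1) (hc3 : (c * c) * c = 1)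
    (hT : ∀ x z : Q, x * z = c * x → z ∈ ({1, c, c * c} : Set Q)) (y : Q) :
    c * y = y * c ∨ (c * y) * c = y := by
  obtain ⟨z, hz⟩ := (QLoop.bij_left y).2 (c * y)
  have hz : y * z = c * y := hz
  rcases hT y z hz with rfl | rfl | rfl
  · refine absurd (QLoop.cancel_right (a := y) ?_) hc1
    rw [QLoop.one_mul, ← hz, QLoop.mul_one]
  · exact Or.inl hz.symm
  · rw [← hbol.mul_mul_self] at hz
    exact Or.inr ((hbol.eq_mul_mul_iff_mul_eq hc3).1 hz.symm)

theorem mul_twisted_of_comm (hbol : IsRightBol Q) (hc : c ∈ leftNucleus Q) {x y : Q}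
    (hx : (c * x) * c = x) (hy : c * y = y * c) : (c * (y * x)) * c = y * x := by
  rw [hc, hy, hbol, hx]

theorem mul_comm_of_twisted (hbol : IsRightBol Q) (hc : c ∈ leftNucleus Q)
    (hc3 : (c * c) * c = 1) {x y : Q} (hx : (c * x) * c = x) (hy : (c * y) * c = y) :
    c * (y * x) = (y * x) * c := by
  have hy' : c * y = ((y * c) * c) := (hbol.eq_mul_mul_iff_mul_eq hc3).2 hy
  apply QLoop.cancel_right (a := c)
  apply QLoop.cancel_right (a := c)
  rw [hbol.mul_mul_mul_of_cube_eq_one hc3, hc, hy', hbol, hx, hbol, hx]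

end IsRightBol

/-- In a finite right Bol loop of odd order, if c generates a subgroup
H = {1, c, c*c} of order 3 inside the left nucleus and H is invariant under all
mappings T_x, then c lies in the commutant. -/
theorem stmt8 (Q : Type*) [QLoop Q] [Finite Q] (hbol : IsRightBol Q)
    (hodd : Odd (Nat.card Q)) (c : Q) (hc : c ∈ leftNucleus Q) (hc1 : c ≠ 1)
    (hc3 : (c * c) * c = 1)
    (hT : ∀ x z : Q, x * z = c * x → z ∈ ({1, c, c * c} : Set Q)) :
    ∀ y : Q, c * y = y * c := by
  by_contra! ⟨x, hxc⟩
  have hx : (c * x) * c = x := (hbol.mul_comm_or_twisted hc1 hc3 hT x).resolve_left hxc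
  refine Nat.not_even_iff_odd.2 hodd
    (Nat.even_card_of_injective_swap (fun y => c * y = y * c) (QLoop.bij_right x).1 ?_ ?_)
  · exact fun y hy => hbol.mul_ne_mul_of_twisted hc1 hc3 (hbol.mul_twisted_of_comm hc hx hy)
  · exact fun y hy => hbol.mul_comm_of_twisted hc hc3 hx
      ((hbol.mul_comm_or_twisted hc1 hc3 hT y).resolve_left hy)
end

section
/- Let Q be a finite right Bol loop of odd order. Then C(Q) ∩ Nucₗ(Q) = Z(Q); in particular, every element that commutes with all elements of Q and lies in the left nucleus also lies in the middle and right nuclei. -/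
/-!
If `a` commutes with everything and lies in the left nucleus, the right Bol identity makes `a * a`
central, and hence every even power of `a` is central. Left multiplications by powers of `a` are
fixed-point free unless trivial, so an involution among them would pair off the elements of `Q`;
for `|Q|` odd the order `d` of `a` is therefore odd, and `a = a ^ (d + 1)` is central.
-/

theorem Equiv.Perm.odd_orderOf_of_odd_card {α : Type*} [Finite α] (hα : Odd (Nat.card α))
    {g : Equiv.Perm α} (hfree : ∀ (k : ℕ) (x : α), (g ^ k) x = x → g ^ k = 1) :
    Odd (orderOf g) := by
  classical
  have := Fintype.ofFinite α
  refine (Nat.even_or_odd _).resolve_left ?_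
  rintro ⟨k, hk⟩
  have hk0 : 0 < k := by have := orderOf_pos g; omega
  have hne : g ^ k ≠ 1 := pow_ne_one_of_lt_orderOf hk0.ne' (by omega)
  have hsq : (g ^ k) ^ 2 = 1 := by rw [← pow_mul, mul_two, ← hk, pow_orderOf_eq_one]
  have hsupp : (g ^ k).support = Finset.univ :=
    Finset.eq_univ_of_forall fun x => Equiv.Perm.mem_support.2 fun hx => hne (hfree k x hx)
  have h2 := Equiv.Perm.two_dvd_card_support hsq
  rw [hsupp, Finset.card_univ, ← Nat.card_eq_fintype_card] at h2
  exact Nat.not_even_iff_odd.2 hα (even_iff_two_dvd.2 h2)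

section Loop

variable {Q : Type*} [QLoop Q]

theorem one_mem_loopCenter : (1 : Q) ∈ loopCenter Q := fun y z => by
  simp only [QLoop.one_mul, QLoop.mul_one, and_self]

theorem loopCenter_subset : loopCenter Q ⊆ commutant Q ∩ leftNucleus Q :=
  fun _ ha => ⟨fun y => (ha y 1).1, fun y z => (ha y z).2.1⟩

theorem mul_mem_loopCenter_s9 {z w : Q} (hz : z ∈ loopCenter Q) (hw : w ∈ loopCenter Q) :
    z * w ∈ loopCenter Q := by
  have Cz : ∀ y : Q, z * y = y * z := fun y => (hz y 1).1
  have Nlz : ∀ y u : Q, z * (y * u) = (z * y) * u := fun y u => (hz y u).2.1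
  have Nmz : ∀ y u : Q, y * (z * u) = (y * z) * u := fun y u => (hz y u).2.2.1
  have Nrz : ∀ y u : Q, y * (u * z) = (y * u) * z := fun y u => (hz y u).2.2.2
  have Cw : ∀ y : Q, w * y = y * w := fun y => (hw y 1).1
  have Nlw : ∀ y u : Q, w * (y * u) = (w * y) * u := fun y u => (hw y u).2.1
  have Nmw : ∀ y u : Q, y * (w * u) = (y * w) * u := fun y u => (hw y u).2.2.1
  have Nrw : ∀ y u : Q, y * (u * w) = (y * u) * w := fun y u => (hw y u).2.2.2
  intro y u
  refine ⟨?_, ?_, ?_, ?_⟩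
  · calc (z * w) * y = z * (y * w) := by rw [← Nlz, Cw]
      _ = (y * z) * w := by rw [Nlz, Cz]
      _ = y * (z * w) := (Nmz y w).symm
  · calc (z * w) * (y * u) = z * ((w * y) * u) := by rw [← Nlz, Nlw]
      _ = ((z * w) * y) * u := by rw [Nlz, Nlz]
  · calc y * ((z * w) * u) = ((y * z) * w) * u := by rw [← Nlz, Nmz, Nmw]
      _ = (y * (z * w)) * u := by rw [Nmz]
  · calc y * (u * (z * w)) = (y * (u * z)) * w := by rw [Nmz, Nrw]
      _ = (y * u) * (z * w) := by rw [Nrz, Nmz]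

theorem lpow_two_mul_mem_loopCenter {a : Q} (ha : a * a ∈ loopCenter Q) (k : ℕ) :
    lpow a (2 * k) ∈ loopCenter Q := by
  induction k with
  | zero => exact one_mem_loopCenter
  | succ k ih =>
    have hsplit : lpow a (2 * (k + 1)) = lpow a (2 * k) * (a * a) := (ih a a).2.1.symm
    exact hsplit ▸ mul_mem_loopCenter_s9 ih ha

theorem Lt_pow_apply {a : Q} (hc : a ∈ commutant Q) (hl : a ∈ leftNucleus Q) (k : ℕ) (y : Q) :
    (Lt a ^ k) y = lpow a k * y := by
  induction k with
  | zero => exact (QLoop.one_mul y).symm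
  | succ k ih =>
    rw [pow_succ', Equiv.Perm.mul_apply, ih]
    show a * (lpow a k * y) = (lpow a k * a) * y
    rw [hl, hc]

theorem Lt_pow_eq_one_of_apply_eq_self {a : Q} (hc : a ∈ commutant Q)
    (hl : a ∈ leftNucleus Q) {k : ℕ} {y : Q} (hy : (Lt a ^ k) y = y) : Lt a ^ k = 1 := by
  have h1 : lpow a k = 1 := (QLoop.bij_right y).injective <| by
    simp only [← Lt_pow_apply hc hl, hy, QLoop.one_mul]
  ext z
  rw [Lt_pow_apply hc hl, h1, QLoop.one_mul, Equiv.Perm.one_apply]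

theorem IsRightBol.right_alternative (hbol : IsRightBol Q) (x y : Q) :
    (x * y) * y = x * (y * y) := by
  simpa only [QLoop.mul_one] using hbol x y 1

theorem IsRightBol.mul_self_mem_loopCenter (hbol : IsRightBol Q) {a : Q} (hc : a ∈ commutant Q)
    (hl : a ∈ leftNucleus Q) : a * a ∈ loopCenter Q := by
  have hc' : ∀ y : Q, a * y = y * a := hc
  have hl' : ∀ y u : Q, a * (y * u) = (a * y) * u := hl
  have comm : ∀ u : Q, (a * a) * u = u * (a * a) := fun u => by
    calc (a * a) * u = a * (u * a) := by rw [← hl' a u, hc' u]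
      _ = (u * a) * a := by rw [hl', hc']
      _ = u * (a * a) := hbol.right_alternative u a
  have nl : ∀ y u : Q, (a * a) * (y * u) = ((a * a) * y) * u := fun y u => by
    calc (a * a) * (y * u) = a * ((a * y) * u) := by rw [← hl' y u, hl' a]
      _ = ((a * a) * y) * u := by rw [hl' (a * y) u, hl' a y]
  have nm : ∀ x u : Q, x * ((a * a) * u) = (x * (a * a)) * u := fun x u => by
    have h1 : (a * u) * a = (a * a) * u := by rw [← hl', ← hc', hl']
    calc x * ((a * a) * u) = ((x * a) * u) * a := by rw [← h1, hbol]
      _ = ((a * x) * a) * u := by rw [← hc', hl', hl']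
      _ = (x * (a * a)) * u := by rw [hc', hbol.right_alternative]
  intro y u
  refine ⟨comm y, nl y u, nm y u, ?_⟩
  calc y * (u * (a * a)) = ((a * a) * y) * u := by rw [← comm u, nm, comm y]
    _ = (y * u) * (a * a) := by rw [← nl, comm]

end Loop

/-- In a finite right Bol loop of odd order, the intersection of the
commutant with the left nucleus is the center. -/
theorem stmt9 (Q : Type*) [QLoop Q] [Finite Q] (hbol : IsRightBol Q)
    (hodd : Odd (Nat.card Q)) :
    commutant Q ∩ leftNucleus Q = loopCenter Q := by
  refine subset_antisymm (fun a ⟨hc, hl⟩ => ?_) loopCenter_subset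
  obtain ⟨t, ht⟩ : Odd (orderOf (Lt a)) :=
    Equiv.Perm.odd_orderOf_of_odd_card hodd fun _ _ => Lt_pow_eq_one_of_apply_eq_self hc hl
  have hpow : lpow a (orderOf (Lt a)) = 1 := by
    have h := Lt_pow_apply hc hl (orderOf (Lt a)) 1
    rwa [pow_orderOf_eq_one, Equiv.Perm.one_apply, QLoop.mul_one, eq_comm] at h
  have ha : a = lpow a (2 * (t + 1)) := by
    rw [show 2 * (t + 1) = orderOf (Lt a) + 1 by omega]
    exact ((congrArg (· * a) hpow).trans (QLoop.one_mul a)).symm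
  exact ha ▸ lpow_two_mul_mem_loopCenter (hbol.mul_self_mem_loopCenter hc hl) (t + 1)
end

section
/- Let Q be a right Bol loop, let c ∈ Nucₗ(Q) and let c' ∈ Q satisfy c·c' = c'·c = 1. If a ∈ Q satisfies c·a = a·c', then c·(a·a) = (a·a)·c. -/
/-!
Write `c⁻¹` for `c'`. The Bol identity with `y = c⁻¹, z = c` shows that right multiplication by
`c⁻¹` is undone by `c`; with `x = c, y = c⁻¹, z = a` it turns `c a = a c⁻¹` into `c⁻¹ a c⁻¹ = a`.
Then `c (a a) = (c a) a = (a c⁻¹) a = ((a c⁻¹ a) c⁻¹) c = (a (c⁻¹ a c⁻¹)) c = (a a) c`,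
the first step by `c ∈ Nucₗ(Q)` and the fourth by the Bol identity once more.
-/

theorem QLoop.mul_left_cancel_s14 {Q : Type*} [QLoop Q] {a b c : Q} (h : a * b = a * c) : b = c :=
  (QLoop.bij_left a).1 h

theorem QLoop.mul_right_cancel {Q : Type*} [QLoop Q] {a b c : Q} (h : b * a = c * a) : b = c :=
  (QLoop.bij_right a).1 h

namespace IsRightBol

variable {Q : Type*} [QLoop Q] {y z : Q}

theorem mul_mul_cancel_right (hbol : IsRightBol Q) (hyz : y * z = 1) (x : Q) : x * y * z = x := by
  apply QLoop.mul_right_cancel (a := y)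
  rw [hbol, hyz, QLoop.one_mul]

theorem mul_mul_eq_self_of_mul_eq_mul (hbol : IsRightBol Q) {x : Q} (hxy : x * y = 1)
    (hz : x * z = z * y) : y * z * y = z := by
  apply QLoop.mul_left_cancel_s14 (a := x)
  rw [← hbol, hxy, QLoop.one_mul, hz]

end IsRightBol

/-- In a right Bol loop, if c is in the left nucleus with two-sided
inverse c' and c*a = a*c', then c commutes with a*a. -/
theorem stmt14 (Q : Type*) [QLoop Q] (hbol : IsRightBol Q)
    (c c' : Q) (hc : c ∈ leftNucleus Q) (hcc' : c * c' = 1) (hc'c : c' * c = 1)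
    (a : Q) (ha : c * a = a * c') :
    c * (a * a) = (a * a) * c := by
  have hsandwich : c' * a * c' = a := hbol.mul_mul_eq_self_of_mul_eq_mul hcc' ha
  calc c * (a * a)
      = c * a * a := hc a a
    _ = a * c' * a * c' * c := by rw [ha, hbol.mul_mul_cancel_right hc'c]
    _ = a * (c' * a * c') * c := by rw [hbol]
    _ = a * a * c := by rw [hsandwich]
end
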